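/- In the polynomial ring P_n = K[x_1,…,x_n], the Demazure operator identity ∂_{n-1}∂_{n-2}⋯∂_1(ε_{n-1-r}(x_2,…,x_n) · x_1^u) = (−1)^u · δ_{u,r} · 1 holds for all 0 ≤ u, r ≤ n−1, where ε_j denotes the elementary symmetric polynomial of degree j and ∂_i(P) = (P − s_i(P))/(x_{i+1} − x_i). -/

import Mathlib

open MvPolynomial

/-!
Expanding `ε_c(x_2,…,x_n) = ∑_t (-x_1)^t ε_{c-t}(x_1,…,x_n)` and pulling the symmetric factors
through the Demazure operators reduces everything to powers of `x_1`. Since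
`∂_k h_{j+1}(x_1,…,x_k) = -h_j(x_1,…,x_{k+1})`, one gets
`∂_{n-1}⋯∂_1 x_1^m = (-1)^{n-1} h_{m-n+1}(x_1,…,x_n)`, and `0` when `m < n-1`. What remains is
`∑_k (-1)^k ε_{d-k} h_k = δ_{d,0}`, i.e. `E(t) H(-t) = 1` for the generating series of the
`ε`'s and the `h`'s.
-/

/-- `IsDemazure D` says that `D i` is the `i`-th Demazure operator (zero-based: it involves
the transposition of the variables `x_i, x_{i+1}`), characterized by
`D i P * (x_{i+1} - x_i) = P - s_i(P)`; this determines `D i P` uniquely since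
`x_{i+1} - x_i` is a nonzerodivisor. -/
def IsDemazure {K : Type} [Field K] {n : ℕ}
    (D : Fin (n - 1) → MvPolynomial (Fin n) K → MvPolynomial (Fin n) K) : Prop :=
  ∀ (i : Fin (n - 1)) (P : MvPolynomial (Fin n) K),
    D i P * (X (⟨i.val + 1, by have := i.isLt; omega⟩ : Fin n) -
        X (⟨i.val, by have := i.isLt; omega⟩ : Fin n)) =
      P - rename (Equiv.swap (⟨i.val, by have := i.isLt; omega⟩ : Fin n)
        (⟨i.val + 1, by have := i.isLt; omega⟩ : Fin n)) P

open Finset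

section SymmetricFunctions
variable {R S : Type*} [CommRing R] [CommRing S]

namespace List

/-- `l.hsymm j` is the complete homogeneous symmetric polynomial of degree `j` evaluated at the
entries of `l`; the recursion splits its monomials according to whether they contain the head. -/
def hsymm : List R → ℕ → R
  | _, 0 => 1
  | [], _ + 1 => 0
  | a :: l, j + 1 => a * hsymm (a :: l) j + hsymm l (j + 1)

@[simp] theorem hsymm_zero (l : List R) : l.hsymm 0 = 1 := by cases l <;> simp [hsymm]

theorem hsymm_cons_succ (a : R) (l : List R) (j : ℕ) :
    (a :: l).hsymm (j + 1) = a * (a :: l).hsymm j + l.hsymm (j + 1) := by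
  rw [hsymm]

theorem hsymm_singleton (a : R) (j : ℕ) : [a].hsymm j = a ^ j := by
  induction j with
  | zero => simp
  | succ j ih => simp [hsymm_cons_succ, ih, hsymm, pow_succ, mul_comm]

theorem map_hsymm (φ : R →+* S) : ∀ (l : List R) (j : ℕ), φ (l.hsymm j) = (l.map φ).hsymm j
  | l, 0 => by simp
  | [], j + 1 => by simp [hsymm]
  | a :: l, j + 1 => by simp [hsymm_cons_succ, map_hsymm φ (a :: l) j, map_hsymm φ l (j + 1)]

theorem hsymm_cons_sub_hsymm_cons (a b : R) (l : List R) (j : ℕ) :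
    (a :: l).hsymm (j + 1) - (b :: l).hsymm (j + 1) = (a - b) * (b :: a :: l).hsymm j := by
  induction j with
  | zero => simp [hsymm_cons_succ]
  | succ j ih =>
    rw [hsymm_cons_succ a, hsymm_cons_succ b, hsymm_cons_succ b (a :: l)]
    linear_combination b * ih

end List

theorem Multiset.esymm_cons_succ (a : R) (s : Multiset R) (k : ℕ) :
    (a ::ₘ s).esymm (k + 1) = s.esymm (k + 1) + a * s.esymm k := by
  simp [Multiset.esymm, Multiset.powersetCard_cons, Multiset.sum_map_mul_left]

theorem Multiset.esymm_eq_sum_range (a : R) (s : Multiset R) (c : ℕ) :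
    s.esymm c = ∑ t ∈ Finset.range (c + 1), (-a) ^ t * (a ::ₘ s).esymm (c - t) := by
  induction c with
  | zero => simp [Multiset.esymm]
  | succ c ih =>
    rw [sum_range_succ', eq_sub_of_add_eq (esymm_cons_succ a s c).symm, ih, mul_sum]
    simp only [pow_succ, Nat.add_sub_add_right, pow_zero, one_mul, Nat.sub_zero]
    rw [sub_eq_add_neg, add_comm, ← sum_neg_distrib]
    congr 1
    refine sum_congr rfl fun t _ => by ring

theorem List.esymm_mul_hsymm_powerSeries (l : List R) :
    PowerSeries.mk (fun i => (l : Multiset R).esymm i) *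
      PowerSeries.mk (fun j => (-1) ^ j * l.hsymm j) = 1 := by
  induction l with
  | nil =>
    have hE : PowerSeries.mk (fun i => (([] : List R) : Multiset R).esymm i) = 1 := by
      ext (_ | i) <;> simp [Multiset.esymm, Multiset.powersetCard_zero_right, PowerSeries.coeff_one]
    have hH : PowerSeries.mk (fun j => (-1) ^ j * ([] : List R).hsymm j) = 1 := by
      ext (_ | j) <;> simp [List.hsymm, PowerSeries.coeff_one]
    rw [hE, hH, one_mul]
  | cons a l ih =>
    have hE : PowerSeries.mk (fun i => ((a :: l : List R) : Multiset R).esymm i)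
        = (1 + PowerSeries.C a * PowerSeries.X) *
            PowerSeries.mk (fun i => (l : Multiset R).esymm i) := by
      ext (_ | i)
      · simp [Multiset.esymm]
      · simp [← Multiset.cons_coe, Multiset.esymm_cons_succ, add_mul, mul_assoc]
    have hH : PowerSeries.mk (fun j => (-1) ^ j * l.hsymm j)
        = (1 + PowerSeries.C a * PowerSeries.X) *
            PowerSeries.mk (fun j => (-1) ^ j * (a :: l).hsymm j) := by
      ext (_ | j)
      · simp
      · simp [List.hsymm_cons_succ, add_mul, mul_assoc, pow_succ]; ring
    rw [hE, mul_comm (1 + PowerSeries.C a * PowerSeries.X), mul_assoc, ← hH, ih]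

theorem List.sum_range_neg_one_pow_mul_esymm_mul_hsymm (l : List R) (d : ℕ) :
    ∑ k ∈ Finset.range (d + 1), (-1) ^ k * (l : Multiset R).esymm (d - k) * l.hsymm k
      = if d = 0 then 1 else 0 := by
  have := congrArg (PowerSeries.coeff d) (l.esymm_mul_hsymm_powerSeries)
  rw [PowerSeries.coeff_mul, ← Nat.sum_antidiagonal_swap] at this
  simp only [Prod.fst_swap, Prod.snd_swap] at this
  rw [Nat.sum_antidiagonal_eq_sum_range_succ
    (fun j i => PowerSeries.coeff i _ * PowerSeries.coeff j _)] at this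
  simpa [PowerSeries.coeff_one, mul_left_comm, mul_assoc] using this

/-- The `t`-th term vanishes unless `t ≥ N - u`; the surviving ones are the convolution
`he (u - r)` reindexed by `t = N - u + s`. -/
theorem sum_range_neg_one_pow_mul_shift_eq_ite (e h : ℕ → R)
    (he : ∀ d, ∑ k ∈ range (d + 1), (-1) ^ k * e (d - k) * h k = if d = 0 then 1 else 0)
    {N u r : ℕ} (hu : u ≤ N) (hr : r ≤ N) :
    ∑ t ∈ range (N - r + 1),
        (-1) ^ t * e (N - r - t) * (if N ≤ t + u then (-1) ^ N * h (t + u - N) else 0)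
      = if u = r then (-1) ^ u else 0 := by
  obtain ⟨k, rfl⟩ := Nat.exists_eq_add_of_le hu
  rcases lt_or_ge u r with hur | hru
  · rw [if_neg hur.ne, sum_eq_zero]
    intro t ht
    rw [mem_range] at ht
    rw [if_neg (by omega), mul_zero]
  · obtain ⟨d, rfl⟩ := Nat.exists_eq_add_of_le hru
    have hsign : ((-1 : R) ^ k) ^ 2 = 1 := by rw [← pow_mul, pow_mul']; simp
    have hterm : ∀ s ∈ range (d + 1), (-1) ^ (k + s) * e (r + d + k - r - (k + s))
        * (if r + d + k ≤ k + s + (r + d) then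
            (-1) ^ (r + d + k) * h (k + s + (r + d) - (r + d + k)) else 0)
        = (-1) ^ (r + d) * ((-1) ^ s * e (d - s) * h s) := by
      intro s _
      rw [if_pos (by omega), show r + d + k - r - (k + s) = d - s by omega,
        show k + s + (r + d) - (r + d + k) = s by omega]
      linear_combination ((-1) ^ (r + d) * (-1) ^ s * e (d - s) * h s) * hsign
    rw [show r + d + k - r + 1 = k + (d + 1) by omega, sum_range_add, sum_eq_zero, zero_add,
      sum_congr rfl hterm, ← mul_sum, he d]
    · rcases Nat.eq_zero_or_pos d with rfl | hd
      · simp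
      · rw [if_neg hd.ne', if_neg (by omega), mul_zero]
    · intro t ht
      rw [mem_range] at ht
      rw [if_neg (by omega), mul_zero]

end SymmetricFunctions

section Demazure
variable {K : Type} [Field K] {n : ℕ}

def Fin.lowerOfPred (i : Fin (n - 1)) : Fin n := ⟨i.val, by omega⟩

def Fin.upperOfPred (i : Fin (n - 1)) : Fin n := ⟨i.val + 1, by omega⟩

variable (K n) in
/-- `firstVars K n k = [x_{k-1}, …, x_0]`, reversed so that the variable exchanged by the next
Demazure operator is the head. -/
noncomputable def firstVars (k : ℕ) : List (MvPolynomial (Fin n) K) :=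
  (((List.finRange n).take k).map X).reverse

theorem firstVars_succ {k : ℕ} (hk : k < n) :
    firstVars K n (k + 1) = X ⟨k, hk⟩ :: firstVars K n k := by
  simp [firstVars, List.take_add_one, hk]

theorem rename_swap_of_mem_firstVars {k : ℕ} {a b : Fin n} (ha : k ≤ a.val) (hb : k ≤ b.val)
    {p : MvPolynomial (Fin n) K} (hp : p ∈ firstVars K n k) :
    rename (Equiv.swap a b) p = p := by
  simp only [firstVars, List.mem_reverse, List.mem_map, List.mem_take_iff_getElem] at hp
  obtain ⟨_, ⟨j, hj, rfl⟩, rfl⟩ := hp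
  rw [rename_X, Equiv.swap_apply_of_ne_of_ne] <;>
    simp [Fin.ext_iff, List.getElem_finRange] <;> omega

theorem esymm_firstVars_self (k : ℕ) :
    (firstVars K n n : Multiset (MvPolynomial (Fin n) K)).esymm k = esymm (Fin n) K k := by
  rw [esymm_eq_multiset_esymm]
  simp [firstVars, Fin.univ_val_map, List.ofFn_eq_map, List.take_of_length_le]


theorem X_upperOfPred_sub_X_lowerOfPred_ne_zero (i : Fin (n - 1)) :
    (X i.upperOfPred - X i.lowerOfPred : MvPolynomial (Fin n) K) ≠ 0 :=
  sub_ne_zero.mpr fun h => by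
    simpa [Fin.ext_iff, Fin.upperOfPred, Fin.lowerOfPred] using X_injective h

namespace IsDemazure
variable {D : Fin (n - 1) → MvPolynomial (Fin n) K → MvPolynomial (Fin n) K} (hD : IsDemazure D)
include hD

theorem mul_X_sub_X (i : Fin (n - 1)) (P : MvPolynomial (Fin n) K) :
    D i P * (X i.upperOfPred - X i.lowerOfPred)
      = P - rename (Equiv.swap i.lowerOfPred i.upperOfPred) P :=
  hD i P

theorem apply_eq_of_mul_eq {i : Fin (n - 1)} {P Q : MvPolynomial (Fin n) K}
    (h : Q * (X i.upperOfPred - X i.lowerOfPred)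
      = P - rename (Equiv.swap i.lowerOfPred i.upperOfPred) P) :
    D i P = Q :=
  mul_right_cancel₀ (X_upperOfPred_sub_X_lowerOfPred_ne_zero i)
    ((hD.mul_X_sub_X i P).trans h.symm)

theorem map_add (i : Fin (n - 1)) (P Q : MvPolynomial (Fin n) K) :
    D i (P + Q) = D i P + D i Q :=
  hD.apply_eq_of_mul_eq <| by rw [add_mul, hD.mul_X_sub_X, hD.mul_X_sub_X, _root_.map_add]; ring

theorem map_zero (i : Fin (n - 1)) : D i 0 = 0 :=
  hD.apply_eq_of_mul_eq <| by simp

theorem map_one (i : Fin (n - 1)) : D i 1 = 0 :=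
  hD.apply_eq_of_mul_eq <| by simp

theorem map_mul_of_rename_eq (i : Fin (n - 1)) {E : MvPolynomial (Fin n) K}
    (hE : rename (Equiv.swap i.lowerOfPred i.upperOfPred) E = E) (P : MvPolynomial (Fin n) K) :
    D i (E * P) = E * D i P :=
  hD.apply_eq_of_mul_eq <| by rw [mul_assoc, hD.mul_X_sub_X, _root_.map_mul, hE]; ring

theorem apply_hsymm (i : Fin (n - 1)) {t : List (MvPolynomial (Fin n) K)}
    (ht : ∀ p ∈ t, rename (Equiv.swap i.lowerOfPred i.upperOfPred) p = p) (j : ℕ) :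
    D i ((X i.lowerOfPred :: t).hsymm (j + 1))
      = -(X i.upperOfPred :: X i.lowerOfPred :: t).hsymm j := by
  refine hD.apply_eq_of_mul_eq ?_
  have hmap : (X i.lowerOfPred :: t).map (rename (Equiv.swap i.lowerOfPred i.upperOfPred))
      = X i.upperOfPred :: t := by
    simp [List.map_congr_left ht]
  rw [← AlgHom.coe_toRingHom, List.map_hsymm, AlgHom.coe_toRingHom, hmap,
    List.hsymm_cons_sub_hsymm_cons]
  ring

theorem foldl_sum {ι : Type*} (l : List (Fin (n - 1))) (s : Finset ι)
    (F : ι → MvPolynomial (Fin n) K) :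
    l.foldl (fun P i => D i P) (∑ t ∈ s, F t)
      = ∑ t ∈ s, l.foldl (fun P i => D i P) (F t) := by
  induction l generalizing F with
  | nil => rfl
  | cons i l ih =>
    simp only [List.foldl_cons]
    rw [← ih]
    exact congrArg (List.foldl _ · l) (_root_.map_sum (AddMonoidHom.mk' (D i) (hD.map_add i)) F s)

theorem foldl_mul_of_isSymmetric (l : List (Fin (n - 1))) {E : MvPolynomial (Fin n) K}
    (hE : E.IsSymmetric) (P : MvPolynomial (Fin n) K) :
    l.foldl (fun P i => D i P) (E * P) = E * l.foldl (fun P i => D i P) P := by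
  induction l generalizing P with
  | nil => rfl
  | cons i l ih => rw [List.foldl_cons, hD.map_mul_of_rename_eq i (hE _), ih]; rfl

theorem foldl_take_X_zero_pow (hn : 0 < n) (m : ℕ) {k : ℕ} (hk : k ≤ n - 1) :
    ((List.finRange (n - 1)).take k).foldl (fun P i => D i P) (X ⟨0, hn⟩ ^ m)
      = if k ≤ m then (-1) ^ k * (firstVars K n (k + 1)).hsymm (m - k) else 0 := by
  induction k with
  | zero =>
    rw [firstVars_succ hn]
    simp [firstVars, List.hsymm_singleton]
  | succ k ih =>
    have hk' : k < n - 1 := by omega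
    set i : Fin (n - 1) := ⟨k, hk'⟩
    have htake : (List.finRange (n - 1)).take (k + 1) = (List.finRange (n - 1)).take k ++ [i] := by
      simp [List.take_add_one, hk', i]
    rw [htake, List.foldl_append, ih (by omega), List.foldl_cons, List.foldl_nil]
    have hsign : rename (Equiv.swap i.lowerOfPred i.upperOfPred) ((-1) ^ k)
        = (-1 : MvPolynomial (Fin n) K) ^ k := by
      simp
    rcases lt_trichotomy m k with hmk | rfl | hkm
    · rw [if_neg (by omega), if_neg (by omega), hD.map_zero]
    · rw [if_pos le_rfl, if_neg (by omega), Nat.sub_self, List.hsymm_zero, mul_one,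
        ← mul_one ((-1) ^ m), hD.map_mul_of_rename_eq i hsign, hD.map_one, mul_zero]
    · obtain ⟨j, rfl⟩ := Nat.exists_eq_add_of_lt hkm
      have hstep := hD.apply_hsymm i (t := firstVars K n k)
        (fun p hp => rename_swap_of_mem_firstVars le_rfl (Nat.le_succ k) hp) j
      simp only [Fin.lowerOfPred, Fin.upperOfPred, i] at hstep
      rw [if_pos (by omega), if_pos (by omega), hD.map_mul_of_rename_eq i hsign,
        firstVars_succ (by omega), show k + j + 1 - k = j + 1 by omega, hstep,
        firstVars_succ (by omega), firstVars_succ (by omega), show k + j + 1 - (k + 1) = j by omega]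
      ring

theorem foldl_X_zero_pow (hn : 0 < n) (m : ℕ) :
    (List.finRange (n - 1)).foldl (fun P i => D i P) (X ⟨0, hn⟩ ^ m)
      = if n - 1 ≤ m then (-1) ^ (n - 1) * (firstVars K n n).hsymm (m - (n - 1)) else 0 := by
  have := hD.foldl_take_X_zero_pow hn m le_rfl
  rwa [List.take_of_length_le (by simp), Nat.sub_add_cancel hn] at this

end IsDemazure

end Demazure

/-- The fold applies `∂_1` first and `∂_{n-1}` last; variables are zero-based, so `x_1` is
`X ⟨0, _⟩`. -/
theorem demazure_esymm_identity {K : Type} [Field K] (n : ℕ) (hn : 1 ≤ n)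
    (D : Fin (n - 1) → MvPolynomial (Fin n) K → MvPolynomial (Fin n) K)
    (hD : IsDemazure D) (u r : ℕ) (hu : u ≤ n - 1) (hr : r ≤ n - 1) :
    (List.finRange (n - 1)).foldl (fun P i => D i P)
      ((∑ s ∈ Finset.powersetCard (n - 1 - r)
          ((Finset.univ : Finset (Fin n)).filter (fun i => i ≠ ⟨0, by omega⟩)),
          ∏ i ∈ s, X i) * X (⟨0, by omega⟩ : Fin n) ^ u) =
    if u = r then ((-1 : MvPolynomial (Fin n) K)) ^ u else 0 := by
  set x₀ : MvPolynomial (Fin n) K := X ⟨0, hn⟩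
  have hcons : x₀ ::ₘ (univ.filter (· ≠ ⟨0, hn⟩)).val.map X = univ.val.map X := by
    rw [← Multiset.map_cons, ← Finset.insert_val_of_notMem (by simp), Finset.filter_ne',
      Finset.insert_erase (mem_univ _)]
  have hterm : ∀ t ∈ range (n - 1 - r + 1),
      (List.finRange (n - 1)).foldl (fun P i => D i P)
          ((-x₀) ^ t * esymm (Fin n) K (n - 1 - r - t) * x₀ ^ u)
        = (-1) ^ t * esymm (Fin n) K (n - 1 - r - t) * (if n - 1 ≤ t + u then
            (-1) ^ (n - 1) * (firstVars K n n).hsymm (t + u - (n - 1)) else 0) := by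
    intro t _
    rw [show (-x₀) ^ t * esymm (Fin n) K (n - 1 - r - t) * x₀ ^ u
        = ((-1) ^ t * esymm (Fin n) K (n - 1 - r - t)) * x₀ ^ (t + u) by ring,
      hD.foldl_mul_of_isSymmetric _ (IsSymmetric.mul (fun _ => by simp) (esymm_isSymmetric _ _ _)),
      hD.foldl_X_zero_pow hn]
  rw [← Finset.esymm_map_val, Multiset.esymm_eq_sum_range x₀, hcons, ← esymm_eq_multiset_esymm,
    sum_mul, hD.foldl_sum, sum_congr rfl hterm]
  refine sum_range_neg_one_pow_mul_shift_eq_ite _ _ (fun d => ?_) hu hr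
  simpa only [esymm_firstVars_self] using
    (firstVars K n n).sum_range_neg_one_pow_mul_esymm_mul_hsymm d
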